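/- If A and B are trace class operators on a Hilbert space, then |det(I+A) - det(I+B)| ≤ ‖A-B‖₁ · exp(‖A‖₁ + ‖B‖₁ + 1), where ‖·‖₁ denotes the trace norm. -/

import Mathlib

open Matrix
open scoped ComplexOrder

open scoped MatrixOrder in
/-- The trace norm (Schatten 1-norm) of a complex matrix: the trace of `√(Aᴴ A)`. -/
noncomputable def traceNorm {n : ℕ} (A : Matrix (Fin n) (Fin n) ℂ) : ℝ :=
  ((CFC.sqrt (Aᴴ * A)).trace).re

open scoped MatrixOrder in
noncomputable abbrev Matrix.PosSemidef.sqrt {n : ℕ} {A : Matrix (Fin n) (Fin n) ℂ}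
    (_ : A.PosSemidef) : Matrix (Fin n) (Fin n) ℂ :=
  CFC.sqrt A

open scoped MatrixOrder in
lemma Matrix.PosSemidef.posSemidef_sqrt {n : ℕ} {A : Matrix (Fin n) (Fin n) ℂ}
    (hA : A.PosSemidef) : hA.sqrt.PosSemidef :=
  (CFC.sqrt_nonneg A).posSemidef

open scoped MatrixOrder in
lemma Matrix.PosSemidef.sqrt_mul_self {n : ℕ} {A : Matrix (Fin n) (Fin n) ℂ}
    (hA : A.PosSemidef) : hA.sqrt * hA.sqrt = A :=
  CFC.sqrt_mul_sqrt_self A hA.nonneg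

namespace TraceNormAux

variable {n : ℕ}

lemma spectral_theorem_old {A : Matrix (Fin n) (Fin n) ℂ} (hA : A.IsHermitian) :
    A = (hA.eigenvectorUnitary : Matrix (Fin n) (Fin n) ℂ) *
      Matrix.diagonal (RCLike.ofReal ∘ hA.eigenvalues) *
        star (hA.eigenvectorUnitary : Matrix (Fin n) (Fin n) ℂ) :=
  hA.spectral_theorem

lemma abs_dotProduct_le (v w : Fin n → ℂ) :
    ‖(star v ⬝ᵥ w)‖ ≤
      Real.sqrt ((star v ⬝ᵥ v).re) * Real.sqrt ((star w ⬝ᵥ w).re) := by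
  have h := norm_inner_le_norm (𝕜 := ℂ)
    (WithLp.toLp 2 v) (WithLp.toLp 2 w)
  have hvw : (inner ℂ (WithLp.toLp 2 v)
      (WithLp.toLp 2 w) : ℂ) = star v ⬝ᵥ w := by
    rw [EuclideanSpace.inner_toLp_toLp, dotProduct_comm]
  have hv : ‖WithLp.toLp 2 v‖ = Real.sqrt ((star v ⬝ᵥ v).re) := by
    rw [norm_eq_sqrt_re_inner (𝕜 := ℂ), EuclideanSpace.inner_toLp_toLp, dotProduct_comm]; rfl
  have hw : ‖WithLp.toLp 2 w‖ = Real.sqrt ((star w ⬝ᵥ w).re) := by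
    rw [norm_eq_sqrt_re_inner (𝕜 := ℂ), EuclideanSpace.inner_toLp_toLp, dotProduct_comm]; rfl
  rw [hvw, hv, hw] at h
  exact h

lemma sum_eigenvalues_eq (A : Matrix (Fin n) (Fin n) ℂ) :
    traceNorm A =
      ∑ i, ((Matrix.posSemidef_conjTranspose_mul_self A).posSemidef_sqrt.1.eigenvalues i) := by
  set hP := (Matrix.posSemidef_conjTranspose_mul_self A).posSemidef_sqrt
  have hspec := spectral_theorem_old hP.1
  have : (Matrix.posSemidef_conjTranspose_mul_self A).sqrt.trace
      = ∑ i, ((hP.1.eigenvalues i : ℝ) : ℂ) := by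
    conv_lhs => rw [hspec]
    rw [Matrix.trace_mul_cycle]
    rw [(Matrix.mem_unitaryGroup_iff'.mp hP.1.eigenvectorUnitary.2 : _)]
    simp [Matrix.trace_diagonal]
  rw [traceNorm, this]
  simp

lemma abs_trace_unitary_mul_le (A : Matrix (Fin n) (Fin n) ℂ)
    (U : Matrix (Fin n) (Fin n) ℂ) (hU : U ∈ Matrix.unitaryGroup (Fin n) ℂ) :
    ‖((U * A).trace)‖ ≤ traceNorm A := by
  have hpsd := Matrix.posSemidef_conjTranspose_mul_self A
  set hP := hpsd.posSemidef_sqrt with hPdef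
  set P := hpsd.sqrt with hP2
  set Q : Matrix (Fin n) (Fin n) ℂ := (hP.1.eigenvectorUnitary : Matrix (Fin n) (Fin n) ℂ) with hQdef
  set d := hP.1.eigenvalues with hddef
  have hQ1 : star Q * Q = 1 := Matrix.mem_unitaryGroup_iff'.mp hP.1.eigenvectorUnitary.2
  have hQ2 : Q * star Q = 1 := Matrix.mem_unitaryGroup_iff.mp hP.1.eigenvectorUnitary.2
  have hU1 : star U * U = 1 := Matrix.mem_unitaryGroup_iff'.mp hU
  set q : Fin n → Fin n → ℂ := fun c i => Q i c with hqdef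
  have horth : ∀ i j, star (q i) ⬝ᵥ q j = if i = j then (1 : ℂ) else 0 := by
    intro i j
    have h : (star Q * Q) i j = (1 : Matrix (Fin n) (Fin n) ℂ) i j := by rw [hQ1]
    rw [Matrix.mul_apply] at h
    simpa [Matrix.one_apply, Matrix.star_apply, dotProduct, hqdef] using h
  -- P acts on columns as eigenvalues
  have hPQ : P * Q = Q * Matrix.diagonal ((↑) ∘ d : Fin n → ℂ) := by
    conv_lhs => rw [spectral_theorem_old hP.1, mul_assoc, hQ1, mul_one]
    rfl
  have hPq : ∀ c, P *ᵥ q c = fun i => (d c : ℂ) * q c i := by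
    intro c; funext i
    have h : (P * Q) i c = (Q * Matrix.diagonal ((↑) ∘ d : Fin n → ℂ)) i c := by rw [hPQ]
    rw [Matrix.mul_diagonal] at h
    simpa [Matrix.mulVec, dotProduct, Matrix.mul_apply, hqdef, mul_comm] using h
  have hAq : ∀ c, star (A *ᵥ q c) ⬝ᵥ (A *ᵥ q c) = (((d c : ℝ) ^ 2 : ℝ) : ℂ) := by
    intro c
    rw [star_mulVec, ← Matrix.dotProduct_mulVec, Matrix.mulVec_mulVec]
    have hAA : Aᴴ * A = P * P := hpsd.sqrt_mul_self.symm
    rw [hAA, ← Matrix.mulVec_mulVec, hPq c]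
    have : P *ᵥ (fun i => (d c : ℂ) * q c i) = fun i => (d c : ℂ) * (P *ᵥ q c) i := by
      funext i
      simp [Matrix.mulVec, dotProduct, Finset.mul_sum]
      congr 1; funext k; ring
    rw [this]
    simp only [hPq c]
    have : star (q c) ⬝ᵥ (fun i => (d c : ℂ) * ((d c : ℂ) * q c i))
        = (d c : ℂ) * ((d c : ℂ) * (star (q c) ⬝ᵥ q c)) := by
      simp [dotProduct, Finset.mul_sum]
      congr 1; funext k; ring
    rw [this, horth c c]
    simp; ring
  -- unitary preserves dot products
  have hUnorm : ∀ v : Fin n → ℂ, star (U *ᵥ v) ⬝ᵥ (U *ᵥ v) = star v ⬝ᵥ v := by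
    intro v
    rw [star_mulVec, ← Matrix.dotProduct_mulVec, Matrix.mulVec_mulVec, (show Uᴴ * U = 1 from hU1), Matrix.one_mulVec]
  -- trace in the eigenbasis
  have htr : (U * A).trace = ∑ c, star (q c) ⬝ᵥ ((U * A) *ᵥ q c) := by
    have h1 : (U * A).trace = (star Q * (U * A) * Q).trace := by
      rw [Matrix.trace_mul_cycle, ← mul_assoc, hQ2, one_mul]
    rw [h1, Matrix.trace]
    congr 1; funext c
    simp [Matrix.diag, Matrix.mul_apply, Matrix.mulVec, dotProduct,
      Matrix.star_apply, hqdef, Finset.mul_sum, Finset.sum_mul]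
    rw [Finset.sum_comm]
    congr 1; funext k; congr 1; funext l
    exact Finset.sum_congr rfl fun x _ => by ring
  -- assemble
  rw [htr]
  calc ‖(∑ c, star (q c) ⬝ᵥ ((U * A) *ᵥ q c))‖
      ≤ ∑ c, ‖(star (q c) ⬝ᵥ ((U * A) *ᵥ q c))‖ :=
        norm_sum_le _ _
    _ ≤ ∑ c, d c := by
        apply Finset.sum_le_sum
        intro c _
        have h := abs_dotProduct_le (q c) ((U * A) *ᵥ q c)
        have h1 : (star (q c) ⬝ᵥ q c).re = 1 := by rw [horth c c]; simp
        have h2 : (star ((U * A) *ᵥ q c) ⬝ᵥ ((U * A) *ᵥ q c)).re = (d c) ^ 2 := by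
          rw [← Matrix.mulVec_mulVec, hUnorm, hAq c]
          exact Complex.ofReal_re _
        rw [h1, h2, Real.sqrt_one, one_mul,
          Real.sqrt_sq (hP.eigenvalues_nonneg c)] at h
        exact h
    _ = traceNorm A := (sum_eigenvalues_eq A).symm

/-- For every complex square matrix `C` there is a unitary `U` with
`|det (1 + C)| ≤ exp (re (tr (U * C)))`. -/
lemma exists_unitary_det_le :
    ∀ (n : ℕ) (C : Matrix (Fin n) (Fin n) ℂ),
      ∃ U ∈ Matrix.unitaryGroup (Fin n) ℂ,
        ‖(1 + C).det‖ ≤ Real.exp (((U * C).trace).re) := by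
  intro n
  induction n with
  | zero =>
    intro C
    refine ⟨1, one_mem _, ?_⟩
    have h1 : ((1 : Matrix (Fin 0) (Fin 0) ℂ) + C).det = 1 := Matrix.det_isEmpty
    have h2 : ((1 : Matrix (Fin 0) (Fin 0) ℂ) * C).trace = 0 := by
      simp [Matrix.trace]
    rw [h1, h2]
    simp
  | succ n ih =>
    intro C
    -- an eigenvector
    obtain ⟨μ, hμ⟩ := Module.End.exists_eigenvalue (Matrix.toEuclideanLin C)
    obtain ⟨v, hv⟩ := hμ.exists_hasEigenvector
    set u : EuclideanSpace ℂ (Fin (n + 1)) := ((‖v‖ : ℂ)⁻¹) • v with hudef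
    have hvn : (‖v‖ : ℝ) ≠ 0 := norm_ne_zero_iff.mpr hv.2
    have hu1 : ‖u‖ = 1 := by
      rw [hudef, norm_smul]
      simp only [norm_inv, Complex.norm_real, Real.norm_eq_abs, abs_norm]
      exact inv_mul_cancel₀ hvn
    have hCu : Matrix.toEuclideanLin C u = μ • u := by
      rw [hudef, LinearMap.map_smul, hv.apply_eq_smul, smul_comm]
    set x : Fin (n + 1) → ℂ := WithLp.equiv 2 (Fin (n + 1) → ℂ) u with hxdef
    have hCx : C *ᵥ x = μ • x := by
      have h := congrArg (WithLp.equiv 2 (Fin (n + 1) → ℂ)) hCu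
      change C *ᵥ WithLp.ofLp u = WithLp.ofLp (μ • u) at h
      rw [hxdef]
      exact h
    -- orthonormal basis extending u
    have hon : Orthonormal ℂ (Set.restrict {(0 : Fin (n + 1))} (fun _ => u)) := by
      constructor
      · intro i; exact hu1
      · intro i j hij
        exact absurd (Subsingleton.elim i j) hij
    obtain ⟨b, hb⟩ := hon.exists_orthonormalBasis_extension_of_card_eq (by simp)
    have hb0 : b 0 = u := hb 0 rfl
    set Q : Matrix (Fin (n + 1)) (Fin (n + 1)) ℂ :=
      Matrix.of fun i j => (WithLp.equiv 2 (Fin (n + 1) → ℂ)) (b j) i with hQdef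
    have hQ1 : star Q * Q = 1 := by
      ext i j
      rw [Matrix.mul_apply]
      have := orthonormal_iff_ite.mp b.orthonormal i j
      rw [EuclideanSpace.inner_eq_star_dotProduct, dotProduct_comm] at this
      simpa [Matrix.star_apply, dotProduct, Matrix.one_apply, hQdef] using this
    have hQ2 : Q * star Q = 1 := mul_eq_one_comm.mp hQ1
    have hQmem : Q ∈ Matrix.unitaryGroup (Fin (n + 1)) ℂ :=
      Matrix.mem_unitaryGroup_iff'.mpr hQ1
    -- conjugated matrix
    set D : Matrix (Fin (n + 1)) (Fin (n + 1)) ℂ := star Q * C * Q with hDdef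
    have hQ0 : (fun k => Q k 0) = x := by
      funext k
      rw [hQdef, hxdef]
      simp [Matrix.of_apply, hb0]
    have hD0 : ∀ i, D i 0 = if i = 0 then μ else 0 := by
      intro i
      have hcol : (C * Q) = Matrix.of fun k j => (C *ᵥ fun l => Q l j) k := by
        ext k j; simp [Matrix.mul_apply, Matrix.mulVec, dotProduct]
      have h1 : D i 0 = ∑ k, (starRingEnd ℂ) (Q k i) * (C *ᵥ x) k := by
        rw [hDdef, mul_assoc, Matrix.mul_apply]
        rw [hcol]
        simp [Matrix.star_apply, hQ0]
      rw [h1, hCx]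
      have h2 : ∑ k, (starRingEnd ℂ) (Q k i) * (μ • x) k
          = μ * (star (fun k => Q k i) ⬝ᵥ x) := by
        simp [dotProduct, Finset.mul_sum, Pi.smul_apply]
        congr 1; funext k; ring
      rw [h2]
      have h3 : star (fun k => Q k i) ⬝ᵥ x = if i = 0 then 1 else 0 := by
        have := orthonormal_iff_ite.mp b.orthonormal i 0
        rw [EuclideanSpace.inner_eq_star_dotProduct, dotProduct_comm] at this
        rw [← hQ0]
        simpa [dotProduct, Matrix.star_apply, hQdef] using this
      rw [h3]
      split <;> simp
    -- the minor and the induction hypothesis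
    set C' : Matrix (Fin n) (Fin n) ℂ := D.submatrix Fin.succ Fin.succ with hC'def
    obtain ⟨U', hU'mem, hU'⟩ := ih C'
    have hU'2 : U' * star U' = 1 := Matrix.mem_unitaryGroup_iff.mp hU'mem
    -- the phase
    set ξ : ℂ := if μ = 0 then 1 else (‖μ‖ : ℂ) / μ with hξdef
    have hξμ : ξ * μ = (‖μ‖ : ℂ) := by
      rw [hξdef]
      split
      · simp [*]
      · field_simp
    have hξc : ξ * (starRingEnd ℂ) ξ = 1 := by
      have habs : ‖ξ‖ = 1 := by
        rw [hξdef]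
        split
        · simp
        · rw [norm_div, Complex.norm_real, Real.norm_eq_abs, abs_of_nonneg (norm_nonneg μ)]
          exact div_self (norm_ne_zero_iff.mpr ‹¬ μ = 0›)
      rw [Complex.mul_conj, Complex.normSq_eq_norm_sq, habs]
      norm_num
    -- the block unitary
    set V : Matrix (Fin (n + 1)) (Fin (n + 1)) ℂ :=
      Matrix.of fun i j =>
        Fin.cases (Fin.cases ξ (fun _ => (0 : ℂ)) j)
          (fun i' => Fin.cases (0 : ℂ) (fun j' => U' i' j') j) i with hVdef
    have hV00 : V 0 0 = ξ := rfl
    have hV0s : ∀ j : Fin n, V 0 j.succ = 0 := fun j => rfl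
    have hVs0 : ∀ i : Fin n, V i.succ 0 = 0 := fun i => rfl
    have hVss : ∀ i j : Fin n, V i.succ j.succ = U' i j := fun i j => rfl
    have hVmem : V ∈ Matrix.unitaryGroup (Fin (n + 1)) ℂ := by
      rw [Matrix.mem_unitaryGroup_iff]
      ext i j
      rw [Matrix.mul_apply, Fin.sum_univ_succ]
      rcases Fin.eq_zero_or_eq_succ i with rfl | ⟨i', rfl⟩ <;>
        rcases Fin.eq_zero_or_eq_succ j with rfl | ⟨j', rfl⟩
      · simp [Matrix.star_apply, hV00, hV0s, hξc, Matrix.one_apply]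
      · simp [Matrix.star_apply, hV00, hV0s, hVs0, hVss, Matrix.one_apply,
          (Fin.succ_ne_zero j').symm]
      · simp [Matrix.star_apply, hV00, hV0s, hVs0, hVss, Matrix.one_apply,
          Fin.succ_ne_zero i']
      · have h := Matrix.ext_iff.mpr hU'2 i' j'
        rw [Matrix.mul_apply] at h
        rw [hVs0 i', zero_mul, zero_add]
        have e : (∑ k : Fin n, V i'.succ k.succ * (star V) k.succ j'.succ)
            = ∑ k : Fin n, U' i' k * (star U') k j' := by
          refine Finset.sum_congr rfl fun k _ => ?_
          rw [Matrix.star_apply, Matrix.star_apply, hVss, hVss]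
        rw [e, h, Matrix.one_apply, Matrix.one_apply]
        simp [Fin.succ_inj]
    -- determinant identity
    have hsub1 : (1 + D).submatrix Fin.succ Fin.succ = 1 + C' := by
      ext i j
      simp [Matrix.submatrix_apply, Matrix.add_apply, Matrix.one_apply, Fin.succ_inj, hC'def]
    have hdet : (1 + D).det = (1 + μ) * (1 + C').det := by
      rw [Matrix.det_succ_column_zero]
      rw [Finset.sum_eq_single (0 : Fin (n + 1))]
      · have h00 : (1 + D) 0 0 = 1 + μ := by
          simp [Matrix.add_apply, Matrix.one_apply, hD0]
        rw [h00, Fin.succAbove_zero, hsub1]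
        simp
      · intro i _ hi
        have h0 : (1 + D) i 0 = 0 := by
          simp [Matrix.add_apply, Matrix.one_apply, hD0, hi]
        rw [h0]
        ring
      · simp
    have h1D : (1 : Matrix (Fin (n + 1)) (Fin (n + 1)) ℂ) + D = star Q * (1 + C) * Q := by
      rw [Matrix.mul_add, Matrix.mul_one, Matrix.add_mul, hQ1, hDdef]
    have hdetC : ((1 : Matrix (Fin (n + 1)) (Fin (n + 1)) ℂ) + C).det = (1 + D).det := by
      rw [h1D, Matrix.det_mul, Matrix.det_mul]
      have hdq : (star Q).det * Q.det = 1 := by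
        rw [← Matrix.det_mul, hQ1, Matrix.det_one]
      calc ((1 : Matrix (Fin (n + 1)) (Fin (n + 1)) ℂ) + C).det
          = ((star Q).det * Q.det) * (1 + C).det := by rw [hdq, one_mul]
        _ = (star Q).det * (1 + C).det * Q.det := by ring
    -- the unitary and the trace identity
    set U : Matrix (Fin (n + 1)) (Fin (n + 1)) ℂ := Q * V * star Q with hUdef
    have hUmem : U ∈ Matrix.unitaryGroup (Fin (n + 1)) ℂ :=
      mul_mem (mul_mem hQmem hVmem) (Unitary.star_mem hQmem)
    have htrace : (U * C).trace = (‖μ‖ : ℂ) + (U' * C').trace := by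
      have e1 : U * C = Q * (V * (star Q * C)) := by
        rw [hUdef]
        simp only [mul_assoc]
      have h1 : (U * C).trace = (V * D).trace := by
        rw [e1, Matrix.trace_mul_comm, hDdef]
        congr 1
        simp only [mul_assoc]
      rw [h1]
      have hterm0 : (V * D) 0 0 = (‖μ‖ : ℂ) := by
        rw [Matrix.mul_apply, Fin.sum_univ_succ]
        simp [hV00, hV0s, hD0, hξμ]
      have hterms : ∀ i : Fin n, (V * D) i.succ i.succ = (U' * C') i i := by
        intro i
        rw [Matrix.mul_apply, Fin.sum_univ_succ]
        simp [hVs0, hVss, hC'def, Matrix.mul_apply, Matrix.submatrix_apply]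
      rw [Matrix.trace, Fin.sum_univ_succ, Matrix.trace]
      have h0 : (V * D).diag 0 = (‖μ‖ : ℂ) := hterm0
      rw [h0]
      congr 1
      exact Finset.sum_congr rfl fun i _ => hterms i
    -- assembly
    refine ⟨U, hUmem, ?_⟩
    rw [hdetC, hdet, norm_mul]
    have hre : ((U * C).trace).re = ‖μ‖ + ((U' * C').trace).re := by
      rw [htrace]
      simp
    rw [hre, Real.exp_add]
    apply mul_le_mul _ hU' (norm_nonneg _) (Real.exp_pos _).le
    calc ‖(1 + μ)‖ ≤ 1 + ‖μ‖ := by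
          simpa using norm_add_le 1 μ
      _ ≤ Real.exp (‖μ‖) := by
          have := Real.add_one_le_exp (‖μ‖)
          linarith


lemma traceNorm_nonneg (A : Matrix (Fin n) (Fin n) ℂ) : 0 ≤ traceNorm A := by
  rw [sum_eigenvalues_eq]
  exact Finset.sum_nonneg fun i _ =>
    (Matrix.posSemidef_conjTranspose_mul_self A).posSemidef_sqrt.eigenvalues_nonneg i

lemma eq_zero_of_traceNorm_eq_zero (A : Matrix (Fin n) (Fin n) ℂ)
    (h : traceNorm A = 0) : A = 0 := by
  have hpsd := Matrix.posSemidef_conjTranspose_mul_self A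
  set hP := hpsd.posSemidef_sqrt with hPdef
  have hsum : ∑ i, hP.1.eigenvalues i = 0 := by
    rw [← sum_eigenvalues_eq, h]
  have hz : ∀ i ∈ Finset.univ, hP.1.eigenvalues i = 0 :=
    (Finset.sum_eq_zero_iff_of_nonneg fun i _ => hP.eigenvalues_nonneg i).mp hsum
  have hPzero : hpsd.sqrt = 0 := by
    have hst := spectral_theorem_old hP.1
    have hdiag : Matrix.diagonal (RCLike.ofReal ∘ hP.1.eigenvalues : Fin n → ℂ) = 0 := by
      ext i j
      by_cases hij : i = j
      · subst hij
        simp [Matrix.diagonal_apply_eq, hz i (Finset.mem_univ i)]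
      · simp [Matrix.diagonal_apply_ne _ hij]
    rw [hst, hdiag, mul_zero, zero_mul]
  have hAA : Aᴴ * A = 0 := by
    rw [← hpsd.sqrt_mul_self, hPzero, mul_zero]
  exact Matrix.conjTranspose_mul_self_eq_zero.mp hAA

lemma differentiable_det_affine (M N : Matrix (Fin n) (Fin n) ℂ) :
    Differentiable ℂ (fun z : ℂ => (1 + (M + z • N)).det) := by
  have hrepr : (fun z : ℂ => (1 + (M + z • N)).det)
      = fun z => ∑ σ : Equiv.Perm (Fin n), ((Equiv.Perm.sign σ : ℤ) : ℂ) *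
          ∏ i, ((1 + M) (σ i) i + z * N (σ i) i) := by
    funext z
    rw [Matrix.det_apply']
    refine Finset.sum_congr rfl fun σ _ => ?_
    congr 1
    refine Finset.prod_congr rfl fun i _ => ?_
    simp [Matrix.add_apply, Matrix.smul_apply, smul_eq_mul]
    ring
  rw [hrepr]
  apply Differentiable.fun_sum
  intro σ _
  apply Differentiable.const_mul
  apply Differentiable.fun_finsetProd
  intro i _
  exact (differentiable_const _).add (differentiable_id.mul (differentiable_const _))

lemma abs_det_interp_le (A B : Matrix (Fin n) (Fin n) ℂ) (z : ℂ) :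
    ‖(1 + ((1/2 : ℂ) • (A + B) + z • ((1/2 : ℂ) • (A - B)))).det‖
      ≤ Real.exp ((traceNorm A + traceNorm B) / 2
          + ‖z‖ * traceNorm (A - B) / 2) := by
  obtain ⟨U, hUmem, hU⟩ :=
    exists_unitary_det_le n ((1/2 : ℂ) • (A + B) + z • ((1/2 : ℂ) • (A - B)))
  refine hU.trans (Real.exp_le_exp.mpr ?_)
  have hexp : U * ((1/2 : ℂ) • (A + B) + z • ((1/2 : ℂ) • (A - B)))
      = (1/2 : ℂ) • (U * A) + (1/2 : ℂ) • (U * B) + (z/2) • (U * (A - B)) := by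
    rw [Matrix.mul_add, Matrix.mul_smul, Matrix.mul_smul, Matrix.mul_smul, Matrix.mul_add]
    module
  rw [hexp, Matrix.trace_add, Matrix.trace_add, Matrix.trace_smul, Matrix.trace_smul,
    Matrix.trace_smul]
  have h1 : ((U * A).trace).re ≤ traceNorm A :=
    (Complex.re_le_norm _).trans (abs_trace_unitary_mul_le A U hUmem)
  have h2 : ((U * B).trace).re ≤ traceNorm B :=
    (Complex.re_le_norm _).trans (abs_trace_unitary_mul_le B U hUmem)
  have h3 : (((z/2) • (U * (A - B)).trace : ℂ)).re
      ≤ ‖z‖ * traceNorm (A - B) / 2 := by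
    have := abs_trace_unitary_mul_le (A - B) U hUmem
    calc (((z/2) • (U * (A - B)).trace : ℂ)).re
        ≤ ‖((z/2) • (U * (A - B)).trace)‖ := Complex.re_le_norm _
      _ = ‖z‖ / 2 * ‖((U * (A - B)).trace)‖ := by
          rw [smul_eq_mul, norm_mul, norm_div]
          simp
      _ ≤ ‖z‖ / 2 * traceNorm (A - B) := by
          apply mul_le_mul_of_nonneg_left this
          positivity
      _ = ‖z‖ * traceNorm (A - B) / 2 := by ring
  have h4 : (((1/2 : ℂ) • (U * A).trace + (1/2 : ℂ) • (U * B).trace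
      + (z/2) • (U * (A - B)).trace).re)
      = ((U * A).trace).re / 2 + ((U * B).trace).re / 2
        + (((z/2) • (U * (A - B)).trace : ℂ)).re := by
    simp [Complex.add_re, smul_eq_mul, Complex.mul_re]
    ring
  rw [h4]
  linarith

end TraceNormAux

/-- If `A` and `B` are trace class operators, then
`|det(I+A) - det(I+B)| ≤ ‖A-B‖₁ · exp(‖A‖₁ + ‖B‖₁ + 1)`. -/
theorem abs_det_one_add_sub_det_one_add_le {n : ℕ} (A B : Matrix (Fin n) (Fin n) ℂ) :
    ‖((1 + A).det - (1 + B).det)‖ ≤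
      traceNorm (A - B) * Real.exp (traceNorm A + traceNorm B + 1) := by
  classical
  set S : ℝ := traceNorm A + traceNorm B with hSdef
  set Dn : ℝ := traceNorm (A - B) with hDdef
  have hS0 : 0 ≤ S := add_nonneg (TraceNormAux.traceNorm_nonneg A) (TraceNormAux.traceNorm_nonneg B)
  have hD0 : 0 ≤ Dn := TraceNormAux.traceNorm_nonneg (A - B)
  by_cases hDz : Dn = 0
  · have hAB : A = B := sub_eq_zero.mp (TraceNormAux.eq_zero_of_traceNorm_eq_zero _ hDz)
    rw [hAB]
    simp [← hDdef, hAB, hDz]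
  have hdetA : ‖(1 + A).det‖ ≤ Real.exp (traceNorm A) := by
    obtain ⟨U, hUm, hU⟩ := TraceNormAux.exists_unitary_det_le n A
    exact hU.trans (Real.exp_le_exp.mpr
      ((Complex.re_le_norm _).trans (TraceNormAux.abs_trace_unitary_mul_le A U hUm)))
  have hdetB : ‖(1 + B).det‖ ≤ Real.exp (traceNorm B) := by
    obtain ⟨U, hUm, hU⟩ := TraceNormAux.exists_unitary_det_le n B
    exact hU.trans (Real.exp_le_exp.mpr
      ((Complex.re_le_norm _).trans (TraceNormAux.abs_trace_unitary_mul_le B U hUm)))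
  by_cases hD1 : 1 ≤ Dn
  · -- trivial bound
    have he1 : (2 : ℝ) ≤ Real.exp 1 := by
      have := Real.exp_one_gt_d9
      linarith
    calc ‖((1 + A).det - (1 + B).det)‖
        ≤ ‖(1 + A).det‖ + ‖(1 + B).det‖ := by
          simpa using norm_sub_le ((1 + A).det) ((1 + B).det)
      _ ≤ Real.exp (traceNorm A) + Real.exp (traceNorm B) := add_le_add hdetA hdetB
      _ ≤ 2 * Real.exp S := by
          have h1 : Real.exp (traceNorm A) ≤ Real.exp S := by
            apply Real.exp_le_exp.mpr
            have := TraceNormAux.traceNorm_nonneg B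
            rw [hSdef]; linarith
          have h2 : Real.exp (traceNorm B) ≤ Real.exp S := by
            apply Real.exp_le_exp.mpr
            have := TraceNormAux.traceNorm_nonneg A
            rw [hSdef]; linarith
          linarith
      _ ≤ Dn * Real.exp (S + 1) := by
          have hE : (0:ℝ) < Real.exp S := Real.exp_pos _
          calc 2 * Real.exp S ≤ Real.exp 1 * Real.exp S := by nlinarith
            _ = Real.exp (S + 1) := by rw [Real.exp_add S 1]; ring
            _ ≤ Dn * Real.exp (S + 1) := le_mul_of_one_le_left (Real.exp_pos _).le hD1
  · -- Schwarz lemma argument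
    push_neg at hD1
    have hDpos : 0 < Dn := lt_of_le_of_ne hD0 (Ne.symm hDz)
    set M : Matrix (Fin n) (Fin n) ℂ := (1/2 : ℂ) • (A + B) with hMdef
    set N : Matrix (Fin n) (Fin n) ℂ := (1/2 : ℂ) • (A - B) with hNdef
    set f : ℂ → ℂ := fun z => (1 + (M + z • N)).det with hfdef
    have hfA : f 1 = (1 + A).det := by
      have hMA : M + (1 : ℂ) • N = A := by rw [hMdef, hNdef]; module
      show ((1 : Matrix (Fin n) (Fin n) ℂ) + (M + (1 : ℂ) • N)).det = (1 + A).det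
      rw [hMA]
    have hfB : f (-1) = (1 + B).det := by
      have hMB : M + (-1 : ℂ) • N = B := by rw [hMdef, hNdef]; module
      show ((1 : Matrix (Fin n) (Fin n) ℂ) + (M + (-1 : ℂ) • N)).det = (1 + B).det
      rw [hMB]
    have hdf : Differentiable ℂ f := TraceNormAux.differentiable_det_affine M N
    set g : ℂ → ℂ := fun z => f z - f (-z) with hgdef
    have hdg : Differentiable ℂ g := hdf.sub (hdf.comp differentiable_neg)
    have hg0 : g 0 = 0 := by simp [hgdef]
    set R : ℝ := 2 / Dn with hRdef
    have hR1 : 1 < R := by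
      rw [hRdef]
      rw [lt_div_iff₀ hDpos]
      linarith
    set R2 : ℝ := 2 * Real.exp (S / 2 + 1) with hR2def
    have hbound : ∀ z : ℂ, ‖(f z)‖ ≤ Real.exp (S / 2 + ‖z‖ * Dn / 2) := by
      intro z
      have h := TraceNormAux.abs_det_interp_le A B z
      calc ‖(f z)‖
          = ‖(1 + ((1/2 : ℂ) • (A + B) + z • ((1/2 : ℂ) • (A - B)))).det‖ := rfl
        _ ≤ Real.exp ((traceNorm A + traceNorm B) / 2
              + ‖z‖ * traceNorm (A - B) / 2) := h
        _ = Real.exp (S / 2 + ‖z‖ * Dn / 2) := by rw [hSdef, hDdef]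
    have hmaps : Set.MapsTo g (Metric.ball 0 R) (Metric.ball (g 0) R2) := by
      intro z hz
      rw [Metric.mem_ball] at hz ⊢
      rw [hg0, dist_zero_right]
      have hzR : ‖z‖ < R := by
        simpa [Complex.dist_eq] using hz
      have b1 := hbound z
      have b2 := hbound (-z)
      rw [norm_neg] at b2
      have hlt : S / 2 + ‖z‖ * Dn / 2 < S / 2 + 1 := by
        have : ‖z‖ * Dn < R * Dn := by
          apply mul_lt_mul_of_pos_right hzR hDpos
        rw [hRdef] at this
        rw [div_mul_cancel₀] at this
        · linarith
        · exact ne_of_gt hDpos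
      have hexp : Real.exp (S / 2 + ‖z‖ * Dn / 2) < Real.exp (S / 2 + 1) :=
        Real.exp_lt_exp.mpr hlt
      calc ‖g z‖ = ‖(f z - f (-z))‖ := rfl
        _ ≤ ‖(f z)‖ + ‖(f (-z))‖ := by
            simpa using norm_sub_le (f z) (f (-z))
        _ < 2 * Real.exp (S / 2 + 1) := by linarith
    have hmem : (1 : ℂ) ∈ Metric.ball (0 : ℂ) R := by
      rw [Metric.mem_ball]
      simpa [Complex.dist_eq] using hR1
    have hs := Complex.dist_le_div_mul_dist_of_mapsTo_ball hdg.differentiableOn (hmaps.mono_right Metric.ball_subset_closedBall) hmem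
    have hgval : g 1 = (1 + A).det - (1 + B).det := by
      rw [hgdef]
      simp only
      rw [hfA, hfB]
    have hd1 : dist (1 : ℂ) 0 = 1 := by simp
    rw [hg0, hgval, hd1, mul_one, dist_zero_right] at hs
    have hRR : R2 / R = Dn * Real.exp (S / 2 + 1) := by
      rw [hR2def, hRdef]
      field_simp
    rw [hRR] at hs
    calc ‖((1 + A).det - (1 + B).det)‖ = ‖(1 + A).det - (1 + B).det‖ := rfl
      _ ≤ Dn * Real.exp (S / 2 + 1) := hs
      _ ≤ Dn * Real.exp (S + 1) := by
          apply mul_le_mul_of_nonneg_left _ hD0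
          apply Real.exp_le_exp.mpr
          linarith
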